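/- arXiv:2307.06188 — 3 statements merged into one kernel-verified Lean document; each statement's English description precedes it below -/
import Mathlib

section
/- Let p ∈ (d, ∞], h > 0, and let f be continuous on the closure of hK∩C, differentiable on hK∩C, with |∇f|_{K°} ∈ L_p(hK∩C). Then |f(θ) − S_h f(θ)| ≤ ‖g_h(|·|_K)‖_{L_{p'}(hK∩C)} · ‖|∇f|_{K°}‖_{L_p(hK∩C)}, where f(θ) and S_h f(θ) are understood via the continuous extension of f to the closure. -/
/-!
`f(θ) - S_h f(θ)` is the mean over `E = hK ∩ C` of `f(θ) - f(y)`. Integrating the derivative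
along the segment from `θ` to `y` and using `|⟨∇f, y⟩| ≤ |∇f|_{K°} |y|_K` gives
`|f(θ) - f(y)| ≤ ∫₀¹ |∇f(ty)|_{K°} |y|_K dt`.
Because `C` is a cone, `t • E = thK ∩ C`; substituting `x = ty` and exchanging the integrals
turns the mean of the right-hand side into
`|E|⁻¹ ∫_E |∇f(x)|_{K°} |x|_K ∫_{|x|_K/h}^1 t^{-d-1} dt dx = ∫_E g_h(|x|_K) |∇f(x)|_{K°} dx`,
and Hölder's inequality with exponents `p'` and `p` concludes.
-/

open MeasureTheory Real Set
open scoped ENNReal Pointwise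

noncomputable section
open scoped Classical

/-- The conjugate exponent `p' = p/(p-1)` in `ℝ≥0∞`, defined via `1/p' = 1 - 1/p`
(so that `p = ∞` gives `p' = 1`). -/
def conjExp (p : ℝ≥0∞) : ℝ≥0∞ := (1 - p⁻¹)⁻¹

/-- The Euler Beta function. -/
def eulerBeta (a b : ℝ) : ℝ := Real.Gamma a * Real.Gamma b / Real.Gamma (a + b)

/-- The constant `A(d,p) = d⁻¹ B(1-(d-1)p'/d, p'+1)^{1/p'}`. -/
def Aconst (d : ℕ) (p : ℝ≥0∞) : ℝ :=
  (d : ℝ)⁻¹ *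
    eulerBeta (1 - ((d : ℝ) - 1) * (conjExp p).toReal / d) ((conjExp p).toReal + 1) ^
      (1 / (conjExp p).toReal)

/-- The exponent `α = pd/(p+(p-1)d) = dp'/(p'+d)` (the latter form makes sense also
for `p = ∞`). -/
def alphaConst (d : ℕ) (p : ℝ≥0∞) : ℝ :=
  (d : ℝ) * (conjExp p).toReal / ((conjExp p).toReal + d)

/-- The constant `a(d,p) = ((p-d)A(d,p)/(pd))^α (pd/(p-d)+1)`, written using
`(p-d)/(pd) = 1/d - 1/p` so that `p = ∞` is allowed. -/
def aConst (d : ℕ) (p : ℝ≥0∞) : ℝ :=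
  (((d : ℝ)⁻¹ - p.toReal⁻¹) * Aconst d p) ^ alphaConst d p *
    (((d : ℝ)⁻¹ - p.toReal⁻¹)⁻¹ + 1)

variable {d : ℕ}

/-- The dual norm `|z|_{K°} = sup {⟨x,z⟩ : |x|_K ≤ 1}`, where `|·|_K` is the gauge of `K`. -/
def dualNorm (K : Set (EuclideanSpace ℝ (Fin d))) (z : EuclideanSpace ℝ (Fin d)) : ℝ :=
  sSup ((fun x => (inner ℝ x z : ℝ)) '' {x | gauge K x ≤ 1})

/-- The function `g_h(u) = (d μ(K∩C))⁻¹ (u^{1-d} - u/h^d)`. -/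
def gfun (K C : Set (EuclideanSpace ℝ (Fin d))) (h u : ℝ) : ℝ :=
  ((d : ℝ) * (volume (K ∩ C)).toReal)⁻¹ * (u ^ (1 - (d : ℝ)) - u / h ^ d)

/-- The Steklov type operator `S_h f(x) = (h^d μ(K∩C))⁻¹ ∫_{hK∩C} f(x+y) dy`. -/
def steklov (K C : Set (EuclideanSpace ℝ (Fin d))) (h : ℝ) (f : EuclideanSpace ℝ (Fin d) → ℝ)
    (x : EuclideanSpace ℝ (Fin d)) : ℝ :=
  (h ^ d * (volume (K ∩ C)).toReal)⁻¹ * ∫ y in (h • K) ∩ C, f (x + y)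

/-- The set of values `|∫_{hK∩C} f(x+u) du|`, `x ∈ C`, whose supremum is `⌋f⌈_h`. -/
def semiSet (K C : Set (EuclideanSpace ℝ (Fin d))) (h : ℝ) (f : EuclideanSpace ℝ (Fin d) → ℝ) :
    Set ℝ :=
  (fun x => |∫ u in (h • K) ∩ C, f (x + u)|) '' C

/-- The seminorm `⌋f⌈_h = sup_{x ∈ C} |∫_{hK∩C} f(x+u) du|`. -/
def semiNorm (K C : Set (EuclideanSpace ℝ (Fin d))) (h : ℝ) (f : EuclideanSpace ℝ (Fin d) → ℝ) :
    ℝ :=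
  sSup (semiSet K C h f)

/-- The seminorm `⌋f⌈ = sup_{t>0} ⌋f⌈_t`. -/
def semiNormAll (K C : Set (EuclideanSpace ℝ (Fin d))) (f : EuclideanSpace ℝ (Fin d) → ℝ) : ℝ :=
  sSup (⋃ t ∈ Set.Ioi (0 : ℝ), semiSet K C t f)

/-- The extremal function `f_{e,h}`. -/
def fe (K C : Set (EuclideanSpace ℝ (Fin d))) (p : ℝ≥0∞) (h : ℝ)
    (y : EuclideanSpace ℝ (Fin d)) : ℝ :=
  if y ∈ h • K then ∫ u in gauge K y..h, gfun K C h u ^ ((conjExp p).toReal - 1) else 0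


open Filter Topology

section Gauge

variable {V : Type*} [NormedAddCommGroup V] [NormedSpace ℝ V] {K C : Set V}

theorem smul_setOf_gauge_lt (K : Set V) {t : ℝ} (ht : 0 < t) (s : ℝ) :
    t • {x | gauge K x < s} = {x | gauge K x < t * s} := by
  ext x
  rw [mem_smul_set_iff_inv_smul_mem₀ ht.ne', mem_ofPred_eq, mem_ofPred_eq,
    gauge_smul_of_nonneg (inv_nonneg.2 ht.le), smul_eq_mul, inv_mul_lt_iff₀ ht]

theorem smul_eq_self_of_cone (hC_cone : ∀ x ∈ C, ∀ t : ℝ, 0 < t → t • x ∈ C) {t : ℝ}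
    (ht : 0 < t) : t • C = C := by
  refine (smul_set_subset_iff.2 fun x hx => hC_cone x hx t ht).antisymm fun x hx => ?_
  exact ⟨t⁻¹ • x, hC_cone x hx t⁻¹ (inv_pos.2 ht), smul_inv_smul₀ ht.ne' x⟩

theorem smul_setOf_gauge_lt_inter_cone (hC_cone : ∀ x ∈ C, ∀ t : ℝ, 0 < t → t • x ∈ C)
    {t : ℝ} (ht : 0 < t) (s : ℝ) :
    t • ({x | gauge K x < s} ∩ C) = {x | gauge K x < t * s} ∩ C := by
  rw [smul_set_inter₀ ht.ne', smul_setOf_gauge_lt K ht, smul_eq_self_of_cone hC_cone ht]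

theorem smul_mem_setOf_gauge_lt_inter_cone (hC_cone : ∀ x ∈ C, ∀ t : ℝ, 0 < t → t • x ∈ C)
    {s : ℝ} {y : V} (hy : y ∈ {x | gauge K x < s} ∩ C) {t : ℝ} (ht : t ∈ Ioc (0 : ℝ) 1) :
    t • y ∈ {x | gauge K x < s} ∩ C := by
  refine ⟨?_, hC_cone y hy.2 t ht.1⟩
  rw [mem_ofPred_eq, gauge_smul_of_nonneg ht.1.le, smul_eq_mul]
  exact (mul_le_of_le_one_left (gauge_nonneg y) ht.2).trans_lt hy.1

theorem smul_eq_setOf_gauge_lt (hK_conv : Convex ℝ K) (hK_zero : (0 : V) ∈ K)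
    (hK_open : IsOpen K) {t : ℝ} (ht : 0 < t) : t • K = {x | gauge K x < t} := by
  simpa only [setOfPred_gauge_lt_one_eq_self_of_isOpen hK_conv hK_zero hK_open, mul_one]
    using smul_setOf_gauge_lt K ht 1

theorem nonempty_inter_cone (hK : K ∈ 𝓝 (0 : V)) (hC_cone : ∀ x ∈ C, ∀ t : ℝ, 0 < t → t • x ∈ C)
    (hC_ne : C.Nonempty) : (K ∩ C).Nonempty := by
  obtain ⟨c, hc⟩ := hC_ne
  have hlim : Tendsto (fun t : ℝ => t • c) (𝓝[>] 0) (𝓝 0) := by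
    have hcont : Continuous fun t : ℝ => t • c := continuous_id.smul continuous_const
    simpa using (hcont.tendsto 0).mono_left nhdsWithin_le_nhds
  obtain ⟨t, htK, ht⟩ := ((hlim.eventually_mem hK).and self_mem_nhdsWithin).exists
  exact ⟨t • c, htK, hC_cone c hc t ht⟩

theorem exists_norm_le_mul_gauge (hK_abs : Absorbent ℝ K) (hK_bdd : Bornology.IsBounded K) :
    ∃ r, 0 ≤ r ∧ ∀ x, ‖x‖ ≤ r * gauge K x := by
  obtain ⟨r, hr, hKr⟩ := hK_bdd.subset_closedBall_lt 0 0
  exact ⟨r, hr.le, fun x => (div_le_iff₀' hr).1 (le_gauge_of_subset_closedBall hK_abs hr.le hKr)⟩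

end Gauge

section DualNorm

variable {K : Set (EuclideanSpace ℝ (Fin d))}

theorem bddAbove_inner_of_gauge_le_one (hK_abs : Absorbent ℝ K) (hK_bdd : Bornology.IsBounded K)
    (z : EuclideanSpace ℝ (Fin d)) :
    BddAbove ((fun x => (inner ℝ x z : ℝ)) '' {x | gauge K x ≤ 1}) := by
  obtain ⟨r, hr0, hr⟩ := exists_norm_le_mul_gauge hK_abs hK_bdd
  refine ⟨r * ‖z‖, ?_⟩
  rintro _ ⟨x, hx, rfl⟩
  calc (inner ℝ x z : ℝ) ≤ ‖x‖ * ‖z‖ := real_inner_le_norm x z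
    _ ≤ r * ‖z‖ := by gcongr; exact (hr x).trans (mul_le_of_le_one_right hr0 hx)

theorem inner_le_dualNorm (hK_abs : Absorbent ℝ K) (hK_bdd : Bornology.IsBounded K)
    {x : EuclideanSpace ℝ (Fin d)} (hx : gauge K x ≤ 1) (z : EuclideanSpace ℝ (Fin d)) :
    inner ℝ x z ≤ dualNorm K z :=
  le_csSup (bddAbove_inner_of_gauge_le_one hK_abs hK_bdd z) ⟨x, hx, rfl⟩

theorem dualNorm_nonneg (hK_abs : Absorbent ℝ K) (hK_bdd : Bornology.IsBounded K)
    (z : EuclideanSpace ℝ (Fin d)) : 0 ≤ dualNorm K z := by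
  simpa using inner_le_dualNorm hK_abs hK_bdd (x := 0) (by simp) z

theorem inner_le_dualNorm_mul_gauge (hK_abs : Absorbent ℝ K) (hK_bdd : Bornology.IsBounded K)
    (y z : EuclideanSpace ℝ (Fin d)) :
    inner ℝ y z ≤ dualNorm K z * gauge K y := by
  obtain ⟨r, -, hr⟩ := exists_norm_le_mul_gauge hK_abs hK_bdd
  rcases (gauge_nonneg y).eq_or_lt with hy | hy
  · have hy0 := hr y
    rw [← hy, mul_zero, norm_le_zero_iff] at hy0
    simp [hy0]
  · have hunit : gauge K ((gauge K y)⁻¹ • y) ≤ 1 := by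
      rw [gauge_smul_of_nonneg (inv_nonneg.2 hy.le), smul_eq_mul, inv_mul_cancel₀ hy.ne']
    have hle := inner_le_dualNorm hK_abs hK_bdd hunit z
    rwa [real_inner_smul_left, inv_mul_le_iff₀ hy, mul_comm] at hle

theorem abs_inner_le_dualNorm_mul_gauge (hK_abs : Absorbent ℝ K) (hK_bdd : Bornology.IsBounded K)
    (hK_symm : ∀ x ∈ K, -x ∈ K) (y z : EuclideanSpace ℝ (Fin d)) :
    |inner ℝ y z| ≤ dualNorm K z * gauge K y := by
  have hneg := inner_le_dualNorm_mul_gauge hK_abs hK_bdd (-y) z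
  rw [inner_neg_left, gauge_neg hK_symm] at hneg
  exact abs_le.2 ⟨by linarith, inner_le_dualNorm_mul_gauge hK_abs hK_bdd y z⟩

theorem continuous_dualNorm (hK_abs : Absorbent ℝ K) (hK_bdd : Bornology.IsBounded K) :
    Continuous (dualNorm K) := by
  obtain ⟨r, hr0, hr⟩ := exists_norm_le_mul_gauge hK_abs hK_bdd
  refine (LipschitzWith.of_le_add_mul' r fun z w => ?_).continuous
  refine csSup_le ⟨_, 0, by simp, rfl⟩ ?_
  rintro _ ⟨x, hx, rfl⟩
  calc (inner ℝ x z : ℝ) = inner ℝ x w + inner ℝ x (z - w) := by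
        rw [← inner_add_right, add_sub_cancel]
    _ ≤ dualNorm K w + ‖x‖ * ‖z - w‖ :=
        add_le_add (inner_le_dualNorm hK_abs hK_bdd hx w) (real_inner_le_norm x _)
    _ ≤ dualNorm K w + r * dist z w := by
        rw [dist_eq_norm]
        gcongr
        exact (hr x).trans (mul_le_of_le_one_right hr0 hx)

theorem measurable_dualNorm_gradient (hK_abs : Absorbent ℝ K) (hK_bdd : Bornology.IsBounded K)
    (f : EuclideanSpace ℝ (Fin d) → ℝ) :
    Measurable fun x => dualNorm K (gradient f x) :=
  (continuous_dualNorm hK_abs hK_bdd).measurable.comp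
    ((InnerProductSpace.toDual ℝ _).symm.continuous.measurable.comp (measurable_fderiv ℝ f))

theorem enorm_fderiv_apply_le (hK_abs : Absorbent ℝ K) (hK_bdd : Bornology.IsBounded K)
    (hK_symm : ∀ x ∈ K, -x ∈ K) (f : EuclideanSpace ℝ (Fin d) → ℝ)
    (x y : EuclideanSpace ℝ (Fin d)) :
    ‖fderiv ℝ f x y‖ₑ ≤
      ENNReal.ofReal (dualNorm K (gradient f x)) * ENNReal.ofReal (gauge K y) := by
  rw [← inner_gradient_left, Real.enorm_eq_ofReal_abs, real_inner_comm,
    ← ENNReal.ofReal_mul (dualNorm_nonneg hK_abs hK_bdd _)]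
  exact ENNReal.ofReal_le_ofReal (abs_inner_le_dualNorm_mul_gauge hK_abs hK_bdd hK_symm _ _)

end DualNorm

theorem enorm_sub_le_lintegral_enorm_of_hasDerivAt {g g' : ℝ → ℝ} {a b : ℝ} (hab : a ≤ b)
    (hcont : ContinuousOn g (Icc a b)) (hderiv : ∀ t ∈ Ioo a b, HasDerivAt g (g' t) t)
    (hg' : Measurable g') : ‖g b - g a‖ₑ ≤ ∫⁻ t in Ioo a b, ‖g' t‖ₑ := by
  by_cases hfin : ∫⁻ t in Ioo a b, ‖g' t‖ₑ = ∞
  · simp [hfin]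
  have hint : IntegrableOn (fun t => |g' t|) (Icc a b) := by
    rw [integrableOn_Icc_iff_integrableOn_Ioo]
    exact ⟨hg'.abs.aestronglyMeasurable,
      by simpa [HasFiniteIntegral] using lt_top_iff_ne_top.2 hfin⟩
  have hup : g b - g a ≤ ∫ t in a..b, |g' t| :=
    intervalIntegral.sub_le_integral_of_hasDeriv_right_of_le hab hcont
      (fun t ht => (hderiv t ht).hasDerivWithinAt) hint fun t _ => le_abs_self _
  have hlow : -g b - -g a ≤ ∫ t in a..b, |g' t| :=
    intervalIntegral.sub_le_integral_of_hasDeriv_right_of_le hab hcont.neg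
      (fun t ht => (hderiv t ht).neg.hasDerivWithinAt) hint fun t _ => neg_le_abs _
  calc ‖g b - g a‖ₑ ≤ ENNReal.ofReal (∫ t in a..b, |g' t|) := by
        rw [Real.enorm_eq_ofReal_abs]
        exact ENNReal.ofReal_le_ofReal (abs_le.2 ⟨by linarith, hup⟩)
    _ = ∫⁻ t in Ioo a b, ‖g' t‖ₑ := by
        rw [intervalIntegral.integral_of_le hab, integral_Ioc_eq_integral_Ioo,
          ofReal_integral_eq_lintegral_ofReal (hint.mono_set Ioo_subset_Icc_self)
            (.of_forall fun _ => abs_nonneg _)]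
        simp_rw [Real.enorm_eq_ofReal_abs]

theorem enorm_sub_le_lintegral_fderiv_segment {V : Type*} [NormedAddCommGroup V]
    [NormedSpace ℝ V] [MeasurableSpace V] [BorelSpace V]
    {E : Set V} (hE : ∀ y ∈ E, ∀ t ∈ Ioc (0 : ℝ) 1, t • y ∈ E) {f : V → ℝ}
    (hf_cont : ContinuousOn f (closure E)) (hf_diff : ∀ x ∈ E, DifferentiableAt ℝ f x)
    {y : V} (hy : y ∈ E) : ‖f y - f 0‖ₑ ≤ ∫⁻ t in Ioo (0 : ℝ) 1, ‖fderiv ℝ f (t • y) y‖ₑ := by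
  have hray : Continuous fun t : ℝ => t • y := continuous_id.smul continuous_const
  have hmaps : MapsTo (fun t : ℝ => t • y) (Icc 0 1) (closure E) := by
    rw [← closure_Ioc zero_ne_one]
    exact MapsTo.closure_left (fun t ht => subset_closure (hE y hy t ht)) hray isClosed_closure
  have hderiv : ∀ t ∈ Ioo (0 : ℝ) 1,
      HasDerivAt (fun s : ℝ => f (s • y)) (fderiv ℝ f (t • y) y) t := fun t ht => by
    have hray' : HasDerivAt (fun s : ℝ => s • y) y t := by
      simpa using (hasDerivAt_id t).smul_const y
    exact (hf_diff _ (hE y hy t (Ioo_subset_Ioc_self ht))).hasFDerivAt.comp_hasDerivAt t hray'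
  simpa using enorm_sub_le_lintegral_enorm_of_hasDerivAt zero_le_one
    (hf_cont.comp hray.continuousOn hmaps) hderiv
    ((measurable_fderiv_apply_const ℝ f y).comp hray.measurable)

section Radial

variable {V : Type*} [NormedAddCommGroup V] [NormedSpace ℝ V] [MeasurableSpace V] [BorelSpace V]
  [FiniteDimensional ℝ V] (μ : Measure V) [μ.IsAddHaarMeasure] {K C : Set V}

theorem setLIntegral_comp_smul (G : V → ℝ≥0∞) {t : ℝ} (ht : 0 < t) (s : Set V) :
    ∫⁻ y in s, G (t • y) ∂μ =
      ENNReal.ofReal (t ^ Module.finrank ℝ V)⁻¹ * ∫⁻ x in t • s, G x ∂μ := by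
  have hφ : MeasurableEmbedding (t • · : V → V) :=
    (Homeomorph.smulOfNeZero t ht.ne').measurableEmbedding
  have hpre : (t • · : V → V) ⁻¹' (t • s) = s := by
    rw [preimage_smul₀ ht.ne', inv_smul_smul₀ ht.ne']
  calc ∫⁻ y in s, G (t • y) ∂μ = ∫⁻ x, G x ∂(μ.restrict ((t • ·) ⁻¹' (t • s))).map (t • ·) := by
        rw [hφ.lintegral_map, hpre]
    _ = _ := by
        rw [← hφ.restrict_map, Measure.map_addHaar_smul μ ht.ne', Measure.restrict_smul,
          lintegral_smul_measure, smul_eq_mul, abs_of_pos (by positivity)]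

theorem addHaar_smul_inter_cone (hC_cone : ∀ x ∈ C, ∀ t : ℝ, 0 < t → t • x ∈ C) {t : ℝ}
    (ht : 0 < t) (K : Set V) :
    μ (t • K ∩ C) = ENNReal.ofReal (t ^ Module.finrank ℝ V) * μ (K ∩ C) := by
  conv_lhs => rw [← smul_eq_self_of_cone hC_cone ht]
  rw [← smul_set_inter₀ ht.ne', Measure.addHaar_smul_of_nonneg μ ht.le]

theorem setLIntegral_comp_smul_setOf_gauge_lt_inter_cone (hK : Measurable (gauge K))
    (hC_cone : ∀ x ∈ C, ∀ t : ℝ, 0 < t → t • x ∈ C) (G : V → ℝ≥0∞) {h t : ℝ} (hh : 0 < h)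
    (ht : t ∈ Ioc (0 : ℝ) 1) :
    ∫⁻ y in {x | gauge K x < h} ∩ C, G (t • y) ∂μ =
      ENNReal.ofReal (t ^ Module.finrank ℝ V)⁻¹ *
        ∫⁻ x in {x | gauge K x < h} ∩ C, {x | gauge K x < t * h}.indicator G x ∂μ := by
  have hA : MeasurableSet {x | gauge K x < t * h} := measurableSet_lt hK measurable_const
  have hAh : {x | gauge K x < t * h} ⊆ {x | gauge K x < h} := fun x (hx : gauge K x < t * h) =>
    hx.trans_le (mul_le_of_le_one_left hh.le ht.2)
  have hsub : {x | gauge K x < t * h} ∩ ({x | gauge K x < h} ∩ C) =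
      {x | gauge K x < t * h} ∩ C := by
    rw [← inter_assoc, inter_eq_left.2 hAh]
  rw [setLIntegral_comp_smul μ G ht.1, smul_setOf_gauge_lt_inter_cone hC_cone ht.1, ← hsub,
    ← Measure.restrict_restrict hA, lintegral_indicator hA]

/-- In the inner integral put `x = t • y`: then `|y|_K = t⁻¹ |x|_K`, `dy = t⁻ⁿ dx`, and `y` ranges
over `t • S = {x ∈ S | |x|_K < t h}`, which after Tonelli restricts `t` to `(|x|_K / h, 1)`. -/
theorem setLIntegral_lintegral_Ioo_smul_eq (hK : Measurable (gauge K))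
    (hC_cone : ∀ x ∈ C, ∀ t : ℝ, 0 < t → t • x ∈ C) {h : ℝ} (hh : 0 < h) {Φ : V → ℝ≥0∞}
    (hΦ : Measurable Φ) :
    ∫⁻ y in {x | gauge K x < h} ∩ C,
        (∫⁻ t in Ioo (0 : ℝ) 1, Φ (t • y) * ENNReal.ofReal (gauge K y)) ∂μ =
      ∫⁻ x in {x | gauge K x < h} ∩ C, Φ x * ENNReal.ofReal (gauge K x) *
        (∫⁻ t in Ioo (gauge K x / h) 1, ENNReal.ofReal (t ^ (-(Module.finrank ℝ V : ℝ) - 1)))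
        ∂μ := by
  set n := Module.finrank ℝ V
  set S := {x | gauge K x < h} ∩ C
  set H : V → ℝ≥0∞ := fun x => Φ x * ENNReal.ofReal (gauge K x)
  set w : ℝ → ℝ≥0∞ := fun t => ENNReal.ofReal (t ^ (-(n : ℝ) - 1))
  have hH : Measurable H := hΦ.mul (ENNReal.measurable_ofReal.comp hK)
  have hw : Measurable w := ENNReal.measurable_ofReal.comp (measurable_id.pow_const _)
  have hslice : ∀ t ∈ Ioo (0 : ℝ) 1, ∫⁻ y in S, Φ (t • y) * ENNReal.ofReal (gauge K y) ∂μ =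
      ∫⁻ x in S, (Ioi (gauge K x / h)).indicator w t * H x ∂μ := by
    intro t ht
    have hscale : ∀ y, Φ (t • y) * ENNReal.ofReal (gauge K y) =
        ENNReal.ofReal t⁻¹ * H (t • y) := fun y => by
      simp only [H, gauge_smul_of_nonneg ht.1.le, smul_eq_mul]
      rw [ENNReal.ofReal_mul ht.1.le, mul_left_comm, ← mul_assoc (ENNReal.ofReal t⁻¹),
        ← ENNReal.ofReal_mul (inv_nonneg.2 ht.1.le), inv_mul_cancel₀ ht.1.ne',
        ENNReal.ofReal_one, one_mul]
    simp_rw [hscale]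
    rw [lintegral_const_mul' _ _ ENNReal.ofReal_ne_top,
      setLIntegral_comp_smul_setOf_gauge_lt_inter_cone μ hK hC_cone H hh (Ioo_subset_Ioc_self ht),
      ← lintegral_const_mul' _ _ ENNReal.ofReal_ne_top,
      ← lintegral_const_mul' _ _ ENNReal.ofReal_ne_top]
    refine lintegral_congr fun x => ?_
    by_cases hx : gauge K x < t * h
    · have hwt : w t = ENNReal.ofReal t⁻¹ * ENNReal.ofReal (t ^ n)⁻¹ := by
        rw [← ENNReal.ofReal_mul (inv_nonneg.2 ht.1.le)]
        simp only [w]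
        rw [Real.rpow_sub_one ht.1.ne', Real.rpow_neg ht.1.le, Real.rpow_natCast,
          div_eq_inv_mul]
      rw [indicator_of_mem (s := {x | gauge K x < t * h}) hx,
        indicator_of_mem (s := Ioi (gauge K x / h)) ((div_lt_iff₀ hh).2 hx), hwt, mul_assoc]
    · rw [indicator_of_notMem (s := {x | gauge K x < t * h}) hx,
        indicator_of_notMem (s := Ioi (gauge K x / h)) fun hx' => hx ((div_lt_iff₀ hh).1 hx'),
        mul_zero, mul_zero, zero_mul]
  have hmeas₁ : Measurable (Function.uncurry fun (y : V) (t : ℝ) =>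
      Φ (t • y) * ENNReal.ofReal (gauge K y)) :=
    (hΦ.comp (measurable_snd.smul measurable_fst)).mul
      (ENNReal.measurable_ofReal.comp (hK.comp measurable_fst))
  have hmeas₂ : Measurable (Function.uncurry fun (t : ℝ) (x : V) =>
      (Ioi (gauge K x / h)).indicator w t * H x) := by
    refine Measurable.mul ?_ (hH.comp measurable_snd)
    simp only [indicator_apply, mem_Ioi]
    exact Measurable.ite (measurableSet_lt ((hK.comp measurable_snd).div_const h) measurable_fst)
      (hw.comp measurable_fst) measurable_const
  calc _ = ∫⁻ t in Ioo (0 : ℝ) 1, ∫⁻ y in S, Φ (t • y) * ENNReal.ofReal (gauge K y) ∂μ :=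
        lintegral_lintegral_swap hmeas₁.aemeasurable
    _ = ∫⁻ t in Ioo (0 : ℝ) 1, ∫⁻ x in S, (Ioi (gauge K x / h)).indicator w t * H x ∂μ :=
        setLIntegral_congr_fun measurableSet_Ioo hslice
    _ = ∫⁻ x in S, (∫⁻ t in Ioo (0 : ℝ) 1, (Ioi (gauge K x / h)).indicator w t * H x) ∂μ :=
        lintegral_lintegral_swap hmeas₂.aemeasurable
    _ = _ := by
        refine lintegral_congr fun x => ?_
        rw [lintegral_mul_const _ (hw.indicator measurableSet_Ioi),
          lintegral_indicator measurableSet_Ioi, Measure.restrict_restrict measurableSet_Ioi,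
          Ioi_inter_Ioo, max_eq_left (div_nonneg (gauge_nonneg x) hh.le), mul_comm]

end Radial

theorem lintegral_Ioo_rpow_neg_sub_one {a r : ℝ} (ha : 0 < a) (hr : 0 < r) :
    ∫⁻ t in Ioo a 1, ENNReal.ofReal (t ^ (-r - 1)) = ENNReal.ofReal ((a ^ (-r) - 1) / r) := by
  rcases lt_or_ge a 1 with ha1 | ha1
  · have hcont : ContinuousOn (fun t : ℝ => t ^ (-r - 1)) (Icc a 1) := fun t ht =>
      (Real.continuousAt_rpow_const _ _ (Or.inl (ha.trans_le ht.1).ne')).continuousWithinAt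
    rw [← ofReal_integral_eq_lintegral_ofReal
        ((hcont.integrableOn_compact isCompact_Icc).mono_set Ioo_subset_Icc_self)
        ((ae_restrict_iff' measurableSet_Ioo).2 (.of_forall fun t ht =>
          (Real.rpow_pos_of_pos (ha.trans ht.1) _).le)),
      ← integral_Ioc_eq_integral_Ioo, ← intervalIntegral.integral_of_le ha1.le,
      integral_rpow (Or.inr ⟨by linarith, fun h0 => by
        rw [uIcc_of_le ha1.le] at h0; exact ha.not_ge h0.1⟩)]
    congr 1
    rw [sub_add_cancel, Real.one_rpow]
    field_simp
    ring
  · rw [Ioo_eq_empty ha1.not_gt, Measure.restrict_empty, lintegral_zero_measure, eq_comm,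
      ENNReal.ofReal_eq_zero]
    exact div_nonpos_of_nonpos_of_nonneg
      (sub_nonpos.2 (Real.rpow_le_one_of_one_le_of_nonpos ha1 (by linarith))) hr.le

theorem gfun_eq (K C : Set (EuclideanSpace ℝ (Fin d))) {h u : ℝ} (hh : 0 < h) (hu : 0 < u) :
    gfun K C h u = (h ^ d * (volume (K ∩ C)).toReal)⁻¹ * (u * ((u / h) ^ (-(d : ℝ)) - 1) / d) := by
  have hrpow : u ^ (1 - (d : ℝ)) - u / h ^ d = u * ((u / h) ^ (-(d : ℝ)) - 1) / h ^ d := by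
    rw [Real.rpow_neg (div_pos hu hh).le, Real.div_rpow hu.le hh.le, Real.rpow_natCast,
      Real.rpow_natCast, Real.rpow_sub hu, Real.rpow_one, Real.rpow_natCast]
    field_simp
  rw [gfun, hrpow]
  ring

theorem inv_mul_lintegral_Ioo_le_enorm_gfun (K C : Set (EuclideanSpace ℝ (Fin d))) (hd : d ≠ 0)
    (hKC0 : volume (K ∩ C) ≠ 0) (hKCtop : volume (K ∩ C) ≠ ∞) {h u : ℝ} (hh : 0 < h)
    (hu : 0 ≤ u) :
    (ENNReal.ofReal (h ^ d) * volume (K ∩ C))⁻¹ *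
        (ENNReal.ofReal u * ∫⁻ t in Ioo (u / h) 1, ENNReal.ofReal (t ^ (-(d : ℝ) - 1))) ≤
      ‖gfun K C h u‖ₑ := by
  rcases hu.eq_or_lt with rfl | hu
  · simp
  have hm : 0 < h ^ d * (volume (K ∩ C)).toReal :=
    mul_pos (pow_pos hh d) (ENNReal.toReal_pos hKC0 hKCtop)
  have hvol : ENNReal.ofReal (h ^ d) * volume (K ∩ C) =
      ENNReal.ofReal (h ^ d * (volume (K ∩ C)).toReal) := by
    rw [ENNReal.ofReal_mul (pow_nonneg hh.le d), ENNReal.ofReal_toReal hKCtop]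
  rw [hvol, lintegral_Ioo_rpow_neg_sub_one (div_pos hu hh) (Nat.cast_pos.2 (Nat.pos_of_ne_zero hd)),
    ← ENNReal.ofReal_inv_of_pos hm, ← ENNReal.ofReal_mul hu.le,
    ← ENNReal.ofReal_mul (inv_nonneg.2 hm.le), gfun_eq K C hh hu, Real.enorm_eq_ofReal_abs,
    mul_div_assoc]
  exact ENNReal.ofReal_le_ofReal (le_abs_self _)

theorem setLIntegral_mul_le_setLIntegral_enorm_gfun_mul (K C : Set (EuclideanSpace ℝ (Fin d)))
    (hd : d ≠ 0) (hKC0 : volume (K ∩ C) ≠ 0) (hKCtop : volume (K ∩ C) ≠ ∞) {h : ℝ} (hh : 0 < h)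
    (S : Set (EuclideanSpace ℝ (Fin d))) {F : EuclideanSpace ℝ (Fin d) → ℝ} (hF : ∀ x, 0 ≤ F x) :
    (ENNReal.ofReal (h ^ d) * volume (K ∩ C))⁻¹ *
        ∫⁻ x in S, ENNReal.ofReal (F x) * ENNReal.ofReal (gauge K x) *
          ∫⁻ t in Ioo (gauge K x / h) 1, ENNReal.ofReal (t ^ (-(d : ℝ) - 1)) ≤
      ∫⁻ x in S, ‖gfun K C h (gauge K x)‖ₑ * ‖F x‖ₑ := by
  rw [← lintegral_const_mul' _ _ (ENNReal.inv_ne_top.2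
    (mul_ne_zero (ENNReal.ofReal_pos.2 (pow_pos hh d)).ne' hKC0))]
  refine lintegral_mono fun x => ?_
  calc _ = ENNReal.ofReal (F x) * ((ENNReal.ofReal (h ^ d) * volume (K ∩ C))⁻¹ *
        (ENNReal.ofReal (gauge K x) *
          ∫⁻ t in Ioo (gauge K x / h) 1, ENNReal.ofReal (t ^ (-(d : ℝ) - 1)))) := by ring
    _ ≤ ENNReal.ofReal (F x) * ‖gfun K C h (gauge K x)‖ₑ := by
        gcongr
        exact inv_mul_lintegral_Ioo_le_enorm_gfun K C hd hKC0 hKCtop hh (gauge_nonneg x)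
    _ = _ := by rw [mul_comm, Real.enorm_of_nonneg (hF x)]

theorem steklov_eq_setAverage {K C : Set (EuclideanSpace ℝ (Fin d))}
    (hC_cone : ∀ x ∈ C, ∀ t : ℝ, 0 < t → t • x ∈ C) {h : ℝ} (hh : 0 < h)
    (f : EuclideanSpace ℝ (Fin d) → ℝ) (x : EuclideanSpace ℝ (Fin d)) :
    steklov K C h f x = ⨍ y in h • K ∩ C, f (x + y) := by
  rw [steklov, setAverage_eq, measureReal_def, addHaar_smul_inter_cone volume hC_cone hh,
    finrank_euclideanSpace_fin, ENNReal.toReal_mul, ENNReal.toReal_ofReal (pow_nonneg hh.le d),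
    smul_eq_mul]

theorem enorm_sub_setAverage_le {α E : Type*} [MeasurableSpace α] [NormedAddCommGroup E]
    [NormedSpace ℝ E] [CompleteSpace E] {μ : Measure α} {s : Set α} (hs0 : μ s ≠ 0)
    (hs : μ s ≠ ∞) {f : α → E} (hf : IntegrableOn f s μ) (c : E) :
    ‖c - ⨍ x in s, f x ∂μ‖ₑ ≤ ⨍⁻ x in s, ‖c - f x‖ₑ ∂μ := by
  have hsub : c - ⨍ x in s, f x ∂μ = ⨍ x in s, (c - f x) ∂μ := by
    rw [setAverage_eq, setAverage_eq, integral_sub (integrableOn_const (C := c) hs) hf,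
      setIntegral_const, smul_sub, smul_smul,
      inv_mul_cancel₀ (measureReal_ne_zero_iff hs |>.2 hs0), one_smul]
  rw [hsub, setAverage_eq', setLAverage_eq']
  exact enorm_integral_le_lintegral_enorm _

theorem enorm_sub_steklov_le {K C : Set (EuclideanSpace ℝ (Fin d))}
    (hC_cone : ∀ x ∈ C, ∀ t : ℝ, 0 < t → t • x ∈ C) {h : ℝ} (hh : 0 < h)
    (hE0 : volume (h • K ∩ C) ≠ 0) (hEtop : volume (h • K ∩ C) ≠ ∞)
    {f : EuclideanSpace ℝ (Fin d) → ℝ} (x : EuclideanSpace ℝ (Fin d))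
    (hf : IntegrableOn (fun y => f (x + y)) (h • K ∩ C)) :
    ‖f x - steklov K C h f x‖ₑ ≤
      (volume (h • K ∩ C))⁻¹ * ∫⁻ y in h • K ∩ C, ‖f x - f (x + y)‖ₑ := by
  rw [steklov_eq_setAverage hC_cone hh, ← ENNReal.div_eq_inv_mul, ← setLAverage_eq]
  exact enorm_sub_setAverage_le hE0 hEtop hf _

theorem setLIntegral_enorm_sub_le_dualNorm_gradient {K C : Set (EuclideanSpace ℝ (Fin d))}
    (hK_open : IsOpen K) (hK_conv : Convex ℝ K) (hK_bdd : Bornology.IsBounded K)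
    (hK_symm : ∀ x ∈ K, -x ∈ K) (hK_zero : (0 : EuclideanSpace ℝ (Fin d)) ∈ K)
    (hC_meas : MeasurableSet C) (hC_cone : ∀ x ∈ C, ∀ t : ℝ, 0 < t → t • x ∈ C) {h : ℝ} (hh : 0 < h)
    {f : EuclideanSpace ℝ (Fin d) → ℝ} (hf_cont : ContinuousOn f (closure (h • K ∩ C)))
    (hf_diff : ∀ x ∈ h • K ∩ C, DifferentiableAt ℝ f x) :
    ∫⁻ y in h • K ∩ C, ‖f 0 - f y‖ₑ ≤
      ∫⁻ x in h • K ∩ C, ENNReal.ofReal (dualNorm K (gradient f x)) *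
        ENNReal.ofReal (gauge K x) *
          ∫⁻ t in Ioo (gauge K x / h) 1, ENNReal.ofReal (t ^ (-(d : ℝ) - 1)) := by
  have hK_abs : Absorbent ℝ K := absorbent_nhds_zero (hK_open.mem_nhds hK_zero)
  have hgauge : Measurable (gauge K) :=
    (continuous_gauge hK_conv (hK_open.mem_nhds hK_zero)).measurable
  have hray := setLIntegral_lintegral_Ioo_smul_eq volume hgauge hC_cone hh
    (measurable_dualNorm_gradient hK_abs hK_bdd f).ennreal_ofReal
  rw [finrank_euclideanSpace_fin] at hray
  rw [smul_eq_setOf_gauge_lt hK_conv hK_zero hK_open hh] at hf_cont hf_diff ⊢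
  rw [← hray]
  refine setLIntegral_mono' ((measurableSet_lt hgauge measurable_const).inter hC_meas)
    fun y hy => ?_
  calc ‖f 0 - f y‖ₑ = ‖f y - f 0‖ₑ := enorm_sub_rev _ _
    _ ≤ ∫⁻ t in Ioo (0 : ℝ) 1, ‖fderiv ℝ f (t • y) y‖ₑ :=
        enorm_sub_le_lintegral_fderiv_segment
          (fun y hy t ht => smul_mem_setOf_gauge_lt_inter_cone hC_cone hy ht) hf_cont hf_diff hy
    _ ≤ _ := lintegral_mono fun t => enorm_fderiv_apply_le hK_abs hK_bdd hK_symm f _ _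

theorem holderConjugate_conjExp {p : ℝ≥0∞} (hp : 1 ≤ p) :
    ENNReal.HolderConjugate (conjExp p) p := by
  rw [ENNReal.holderConjugate_iff, conjExp, inv_inv,
    tsub_add_cancel_of_le (ENNReal.inv_le_one.2 hp)]

theorem lintegral_enorm_mul_le_eLpNorm_conjExp_mul {α : Type*} [MeasurableSpace α]
    {μ : Measure α} {p : ℝ≥0∞} (hp : 1 ≤ p) {g F : α → ℝ} (hg : AEStronglyMeasurable g μ)
    (hF : AEStronglyMeasurable F μ) :
    ∫⁻ x, ‖g x‖ₑ * ‖F x‖ₑ ∂μ ≤ eLpNorm g (conjExp p) μ * eLpNorm F p μ := by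
  have := holderConjugate_conjExp hp
  calc ∫⁻ x, ‖g x‖ₑ * ‖F x‖ₑ ∂μ = eLpNorm (g • F) 1 μ := by
        simp [eLpNorm_one_eq_lintegral_enorm, enorm_mul]
    _ ≤ _ := eLpNorm_smul_le_mul_eLpNorm hF hg

theorem statement1_general (d : ℕ) (hd : 1 ≤ d) (K C : Set (EuclideanSpace ℝ (Fin d)))
    (hC_open : IsOpen C)
    (hC_cone : ∀ x ∈ C, ∀ t : ℝ, 0 < t → t • x ∈ C) (hC_ne : C.Nonempty)
    (hK_open : IsOpen K) (hK_conv : Convex ℝ K) (hK_bdd : Bornology.IsBounded K)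
    (hK_symm : ∀ x ∈ K, -x ∈ K) (hK_zero : (0 : EuclideanSpace ℝ (Fin d)) ∈ K)
    (p : ℝ≥0∞) (hp : (d : ℝ≥0∞) < p) (h : ℝ) (hh : 0 < h)
    (f : EuclideanSpace ℝ (Fin d) → ℝ)
    (hf_cont : ContinuousOn f (closure ((h • K) ∩ C)))
    (hf_diff : ∀ x ∈ (h • K) ∩ C, DifferentiableAt ℝ f x) :
    ENNReal.ofReal |f 0 - steklov K C h f 0| ≤
      eLpNorm (fun y => gfun K C h (gauge K y)) (conjExp p) (volume.restrict ((h • K) ∩ C)) *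
        eLpNorm (fun x => dualNorm K (gradient f x)) p (volume.restrict ((h • K) ∩ C)) := by
  have hvol := addHaar_smul_inter_cone volume hC_cone hh K
  rw [finrank_euclideanSpace_fin] at hvol
  have hKC0 : volume (K ∩ C) ≠ 0 := (hK_open.inter hC_open).measure_ne_zero volume
    (nonempty_inter_cone (hK_open.mem_nhds hK_zero) hC_cone hC_ne)
  have hKCtop : volume (K ∩ C) ≠ ∞ := (hK_bdd.subset inter_subset_left).measure_lt_top.ne
  obtain ⟨hE0, hEtop⟩ : volume (h • K ∩ C) ≠ 0 ∧ volume (h • K ∩ C) ≠ ∞ := by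
    rw [hvol]
    exact ⟨mul_ne_zero (ENNReal.ofReal_pos.2 (pow_pos hh d)).ne' hKC0,
      ENNReal.mul_ne_top ENNReal.ofReal_ne_top hKCtop⟩
  have hf_int : IntegrableOn f (h • K ∩ C) :=
    (hf_cont.integrableOn_compact ((hK_bdd.smul₀ h).subset inter_subset_left).isCompact_closure
      ).mono_set subset_closure
  have hK_abs : Absorbent ℝ K := absorbent_nhds_zero (hK_open.mem_nhds hK_zero)
  have hgauge := continuous_gauge hK_conv (hK_open.mem_nhds hK_zero)
  calc ENNReal.ofReal |f 0 - steklov K C h f 0|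
        ≤ (volume (h • K ∩ C))⁻¹ * ∫⁻ y in h • K ∩ C, ‖f 0 - f y‖ₑ := by
        simpa only [zero_add, Real.enorm_eq_ofReal_abs] using
          enorm_sub_steklov_le hC_cone hh hE0 hEtop 0 (by simpa only [zero_add] using hf_int)
    _ ≤ (volume (h • K ∩ C))⁻¹ * ∫⁻ x in h • K ∩ C, ENNReal.ofReal (dualNorm K (gradient f x)) *
          ENNReal.ofReal (gauge K x) *
            ∫⁻ t in Ioo (gauge K x / h) 1, ENNReal.ofReal (t ^ (-(d : ℝ) - 1)) := by
        gcongr (volume (h • K ∩ C))⁻¹ * ?_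
        exact setLIntegral_enorm_sub_le_dualNorm_gradient hK_open hK_conv hK_bdd hK_symm hK_zero
          hC_open.measurableSet hC_cone hh hf_cont hf_diff
    _ ≤ ∫⁻ x in h • K ∩ C, ‖gfun K C h (gauge K x)‖ₑ * ‖dualNorm K (gradient f x)‖ₑ := by
        rw [hvol]
        exact setLIntegral_mul_le_setLIntegral_enorm_gfun_mul K C (by omega) hKC0 hKCtop hh _
          fun x => dualNorm_nonneg hK_abs hK_bdd _
    _ ≤ _ := lintegral_enorm_mul_le_eLpNorm_conjExp_mul
        ((show (1 : ℝ≥0∞) ≤ d by exact_mod_cast hd).trans hp.le)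
        (by unfold gfun; fun_prop : Measurable fun y => gfun K C h (gauge K y)).aestronglyMeasurable
        (measurable_dualNorm_gradient hK_abs hK_bdd f).aestronglyMeasurable

/-- Ostrowski-type inequality: for `p ∈ (d,∞]`, `h > 0` and `f` continuous on
the closure of `hK ∩ C`, differentiable on `hK ∩ C` with `|∇f|_{K°} ∈ L_p(hK∩C)`, one has
`|f(θ) - S_h f(θ)| ≤ ‖g_h(|·|_K)‖_{L_{p'}(hK∩C)} ‖|∇f|_{K°}‖_{L_p(hK∩C)}`. -/
theorem statement1 (d : ℕ) (hd : 1 ≤ d) (K C : Set (EuclideanSpace ℝ (Fin d)))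
    (hC_open : IsOpen C) (hC_conv : Convex ℝ C)
    (hC_cone : ∀ x ∈ C, ∀ t : ℝ, 0 < t → t • x ∈ C) (hC_ne : C.Nonempty)
    (hK_open : IsOpen K) (hK_conv : Convex ℝ K) (hK_bdd : Bornology.IsBounded K)
    (hK_symm : ∀ x ∈ K, -x ∈ K) (hK_zero : (0 : EuclideanSpace ℝ (Fin d)) ∈ K)
    (p : ℝ≥0∞) (hp : (d : ℝ≥0∞) < p) (h : ℝ) (hh : 0 < h)
    (f : EuclideanSpace ℝ (Fin d) → ℝ)
    (hf_cont : ContinuousOn f (closure ((h • K) ∩ C)))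
    (hf_diff : ∀ x ∈ (h • K) ∩ C, DifferentiableAt ℝ f x)
    (hf_lp :
      eLpNorm (fun x => dualNorm K (gradient f x)) p (volume.restrict ((h • K) ∩ C)) ≠ ∞) :
    ENNReal.ofReal |f 0 - steklov K C h f 0| ≤
      eLpNorm (fun y => gfun K C h (gauge K y)) (conjExp p) (volume.restrict ((h • K) ∩ C)) *
        eLpNorm (fun x => dualNorm K (gradient f x)) p (volume.restrict ((h • K) ∩ C)) :=
  statement1_general d hd K C hC_open hC_cone hC_ne hK_open hK_conv hK_bdd hK_symm hK_zero p hp h hh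
    f hf_cont hf_diff
end
end

section
/- Let p ∈ (d, ∞] and h > 0. Then ⌋f_{e,h}⌈_h = ⌋f_{e,h}⌈ = ‖f_{e,h}‖_{L_1(C)} = ∫_{hK∩C} f_{e,h}(y) dy; that is, the supremum defining ⌋f_{e,h}⌈_h is attained at x = θ, and the same value is the supremum over all window radii t > 0. -/
open MeasureTheory Real Set
open scoped ENNReal Pointwise

noncomputable section
open scoped Classical

variable {d : ℕ}

/-!
The extremal function is a nonnegative continuous radial profile `r ↦ ∫_r^h g_h^{p'-1}` of
`|y|_K`, supported in `hK`; the exponent condition `p > d` makes `g_h^{p'-1}` integrable at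
`0`, which gives continuity. Since a convex cone is closed under addition, every translate
`x + (tK ∩ C)` with `x ∈ C` lies in `C`, so each window integral is at most `∫_C f_{e,h}`,
which is `‖f_{e,h}‖_{L_1(C)}`. Conversely the window integral depends continuously on `x`
and `θ` lies in the closure of `C`, so the window `hK ∩ C` at `θ`, which carries all of
`∫_C f_{e,h}`, is approached by admissible windows.
-/

open Filter Topology

section ConvexCone

variable {E : Type*} [AddCommGroup E] [Module ℝ E] {C : Set E}

theorem Convex.add_mem_of_smul_mem (hC_conv : Convex ℝ C)
    (hC_cone : ∀ x ∈ C, ∀ t : ℝ, 0 < t → t • x ∈ C) {x y : E} (hx : x ∈ C) (hy : y ∈ C) :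
    x + y ∈ C := by
  have hmid : (1 / 2 : ℝ) • x + (1 / 2 : ℝ) • y ∈ C :=
    hC_conv hx hy (by norm_num) (by norm_num) (by norm_num)
  convert hC_cone _ hmid 2 two_pos using 1
  rw [smul_add, smul_smul, smul_smul]
  norm_num

theorem zero_mem_closure_of_smul_mem [TopologicalSpace E] [ContinuousSMul ℝ E]
    (hC_cone : ∀ x ∈ C, ∀ t : ℝ, 0 < t → t • x ∈ C) (hC_ne : C.Nonempty) :
    (0 : E) ∈ closure C := by
  obtain ⟨v, hv⟩ := hC_ne
  have hlim : Tendsto (fun t : ℝ => t • v) (𝓝[>] 0) (𝓝 0) := by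
    have hcont : Continuous fun t : ℝ => t • v := continuous_id.smul continuous_const
    simpa using (hcont.tendsto 0).mono_left nhdsWithin_le_nhds
  exact mem_closure_of_tendsto hlim (eventually_nhdsWithin_of_forall (hC_cone v hv))

end ConvexCone

theorem setIntegral_inter_eq_of_forall_notMem_eq_zero {α : Type*} [MeasurableSpace α]
    {μ : Measure α} {f : α → ℝ} {A C : Set α} (hC : MeasurableSet C) (hf : ∀ y ∉ A, f y = 0) :
    ∫ y in A ∩ C, f y ∂μ = ∫ y in C, f y ∂μ :=
  (setIntegral_eq_of_subset_of_forall_sdiff_eq_zero hC inter_subset_right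
    fun y hy => hf y fun hyA => hy.2 ⟨hyA, hy.1⟩).symm

theorem eLpNorm_one_eq_ofReal_integral {α : Type*} [MeasurableSpace α] {μ : Measure α}
    {f : α → ℝ} (hf : Integrable f μ) (hf₀ : 0 ≤ f) :
    eLpNorm f 1 μ = ENNReal.ofReal (∫ x, f x ∂μ) := by
  rw [eLpNorm_one_eq_lintegral_enorm, ← ofReal_integral_norm_eq_lintegral_enorm hf]
  simp_rw [Real.norm_of_nonneg (hf₀ _)]

section Windows

variable {G : Type*} [AddGroup G] [MeasurableSpace G] {μ : Measure G} {f : G → ℝ}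

theorem setIntegral_comp_add_left_le [MeasurableAdd G] [μ.IsAddLeftInvariant] {C s : Set G}
    {x : G} (hf : Integrable f μ) (hf₀ : 0 ≤ f) (hC : MeasurableSet C) (hs : MeasurableSet s)
    (hxs : ∀ u ∈ s, x + u ∈ C) : ∫ u in s, f (x + u) ∂μ ≤ ∫ y in C, f y ∂μ := by
  calc ∫ u in s, f (x + u) ∂μ = ∫ u in s, C.indicator f (x + u) ∂μ :=
        setIntegral_congr_fun hs fun u hu => (indicator_of_mem (hxs u hu) f).symm
    _ ≤ ∫ u, C.indicator f (x + u) ∂μ :=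
        setIntegral_le_integral ((hf.indicator hC).comp_add_left x)
          (Eventually.of_forall fun u => indicator_nonneg (fun y _ => hf₀ y) _)
    _ = ∫ y in C, f y ∂μ := by rw [integral_add_left_eq_self, integral_indicator hC]

theorem continuous_setIntegral_comp_add_left [TopologicalSpace G] [ContinuousAdd G]
    [OpensMeasurableSpace G] [FirstCountableTopology G] {s : Set G} (hf : Continuous f) {M : ℝ}
    (hM : ∀ y, ‖f y‖ ≤ M) (hs : μ s < ⊤) : Continuous fun x => ∫ u in s, f (x + u) ∂μ :=
  continuous_of_dominated
    (fun x => (hf.comp (continuous_const.add continuous_id)).aestronglyMeasurable)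
    (fun x => Eventually.of_forall fun u => hM (x + u)) (integrableOn_const hs.ne)
    (Eventually.of_forall fun u => hf.comp (continuous_id.add continuous_const))

end Windows

section WindowSeminorms

variable {K C : Set (EuclideanSpace ℝ (Fin d))} {f : EuclideanSpace ℝ (Fin d) → ℝ} {t : ℝ}

theorem le_setIntegral_of_mem_semiSet (hf : Integrable f) (hf₀ : 0 ≤ f) (hK : MeasurableSet K)
    (hC : MeasurableSet C) (hC_add : ∀ x ∈ C, ∀ y ∈ C, x + y ∈ C) {e : ℝ}
    (he : e ∈ semiSet K C t f) : e ≤ ∫ y in C, f y := by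
  obtain ⟨x, hx, rfl⟩ := he
  have hs : MeasurableSet (t • K ∩ C) := (hK.const_smul₀ t).inter hC
  change |∫ u in t • K ∩ C, f (x + u)| ≤ _
  rw [abs_of_nonneg (setIntegral_nonneg hs fun u _ => hf₀ _)]
  exact setIntegral_comp_add_left_le hf hf₀ hC hs fun u hu => hC_add x hx u hu.2

theorem abs_setIntegral_le_csSup (hf : Continuous f) (hfc : HasCompactSupport f)
    (hC₀ : (0 : EuclideanSpace ℝ (Fin d)) ∈ closure C) (hfin : volume (t • K ∩ C) < ⊤)
    {S : Set ℝ} (hS : BddAbove S) (hsub : semiSet K C t f ⊆ S) :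
    |∫ u in t • K ∩ C, f u| ≤ sSup S := by
  obtain ⟨M, hM⟩ := hf.bounded_above_of_compact_support hfc
  have hwindow : Continuous fun x => |∫ u in t • K ∩ C, f (x + u)| :=
    (continuous_setIntegral_comp_add_left hf hM hfin).abs
  have h₀ : |∫ u in t • K ∩ C, f (0 + u)| ∈ closure (semiSet K C t f) :=
    image_closure_subset_closure_image hwindow (mem_image_of_mem _ hC₀)
  simpa only [zero_add, mem_Iic] using
    closure_minimal (t := Iic (sSup S)) (fun e he => le_csSup hS (hsub he)) isClosed_Iic h₀

theorem semiNorm_and_semiNormAll_eq_setIntegral (hf : Continuous f) (hfc : HasCompactSupport f)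
    (hf₀ : 0 ≤ f) (hK : MeasurableSet K) (hC : MeasurableSet C)
    (hC_add : ∀ x ∈ C, ∀ y ∈ C, x + y ∈ C) (hC₀ : (0 : EuclideanSpace ℝ (Fin d)) ∈ closure C)
    {h : ℝ} (hh : 0 < h) (hfin : volume (h • K ∩ C) < ⊤) (hf_supp : ∀ y ∉ h • K, f y = 0) :
    semiNorm K C h f = ∫ y in C, f y ∧ semiNormAll K C f = ∫ y in C, f y := by
  have hub : ∀ t, ∀ e ∈ semiSet K C t f, e ≤ ∫ y in C, f y := fun t e =>
    le_setIntegral_of_mem_semiSet (hf.integrable_of_hasCompactSupport hfc) hf₀ hK hC hC_add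
  have hub_all : ∀ e ∈ ⋃ t ∈ Ioi (0 : ℝ), semiSet K C t f, e ≤ ∫ y in C, f y := by
    simp only [mem_iUnion]
    rintro e ⟨t, -, he⟩
    exact hub t e he
  have hI₀ : 0 ≤ ∫ y in C, f y := integral_nonneg hf₀
  have hlow : ∀ S, BddAbove S → semiSet K C h f ⊆ S → ∫ y in C, f y ≤ sSup S := by
    intro S hS hsub
    rw [← setIntegral_inter_eq_of_forall_notMem_eq_zero hC hf_supp]
    exact (le_abs_self _).trans (abs_setIntegral_le_csSup hf hfc hC₀ hfin hS hsub)
  exact ⟨le_antisymm (Real.sSup_le (hub h) hI₀) (hlow _ ⟨_, hub h⟩ subset_rfl),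
    le_antisymm (Real.sSup_le hub_all hI₀)
      (hlow _ ⟨_, hub_all⟩ (subset_biUnion_of_mem (u := fun t => semiSet K C t f) hh))⟩

end WindowSeminorms

section ConjugateExponent

theorem conjExp_top : conjExp ⊤ = 1 := by simp [conjExp]

theorem conjExp_toReal_sub_one {p : ℝ≥0∞} (hp₁ : 1 < p) (hp : p ≠ ⊤) :
    (conjExp p).toReal - 1 = (p.toReal - 1)⁻¹ := by
  have hP : 1 < p.toReal := by
    simpa using (ENNReal.toReal_lt_toReal ENNReal.one_ne_top hp).2 hp₁
  rw [conjExp, ENNReal.toReal_inv, ENNReal.toReal_sub_of_le (ENNReal.inv_le_one.2 hp₁.le)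
    ENNReal.one_ne_top, ENNReal.toReal_inv, ENNReal.toReal_one]
  have : p.toReal - 1 ≠ 0 := by linarith
  field_simp
  ring

theorem conjExp_toReal_sub_one_bounds {d : ℕ} {p : ℝ≥0∞} (hd : 1 ≤ d) (hp : (d : ℝ≥0∞) < p) :
    0 ≤ (conjExp p).toReal - 1 ∧ -1 < (1 - (d : ℝ)) * ((conjExp p).toReal - 1) := by
  rcases eq_or_ne p ⊤ with rfl | hp_top
  · simp [conjExp_top]
  have hP : (d : ℝ) < p.toReal := by
    simpa using (ENNReal.toReal_lt_toReal (by simp) hp_top).2 hp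
  have hd' : (1 : ℝ) ≤ d := by exact_mod_cast hd
  rw [conjExp_toReal_sub_one (lt_of_le_of_lt (by exact_mod_cast hd) hp) hp_top]
  have hP₁ : 0 < p.toReal - 1 := by linarith
  refine ⟨(inv_pos.2 hP₁).le, ?_⟩
  rw [← div_eq_mul_inv, lt_div_iff₀ hP₁]
  linarith

end ConjugateExponent

section Profile

variable {K C : Set (EuclideanSpace ℝ (Fin d))} {h u : ℝ}

theorem gfun_nonneg (hu : u ∈ Icc 0 h) : 0 ≤ gfun K C h u := by
  refine mul_nonneg (by positivity) (sub_nonneg.2 ?_)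
  rcases hu.1.eq_or_lt with rfl | hu₀
  · simp [Real.rpow_nonneg]
  rw [Real.rpow_sub hu₀, Real.rpow_one, Real.rpow_natCast]
  exact div_le_div_of_nonneg_left hu₀.le (pow_pos hu₀ d) (pow_le_pow_left₀ hu₀.le hu.2 d)

theorem gfun_le (hu : 0 ≤ u) (hh : 0 ≤ h) :
    gfun K C h u ≤ ((d : ℝ) * (volume (K ∩ C)).toReal)⁻¹ * u ^ (1 - (d : ℝ)) :=
  mul_le_mul_of_nonneg_left (sub_le_self _ (by positivity)) (by positivity)

theorem intervalIntegrable_gfun_rpow {q : ℝ} (hq : 0 ≤ q) (hdq : -1 < (1 - (d : ℝ)) * q)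
    (hh : 0 ≤ h) : IntervalIntegrable (fun u => gfun K C h u ^ q) volume 0 h := by
  set c := ((d : ℝ) * (volume (K ∩ C)).toReal)⁻¹
  have hc : 0 ≤ c := by positivity
  have hdom : IntervalIntegrable (fun u : ℝ => c ^ q * u ^ ((1 - (d : ℝ)) * q)) volume 0 h :=
    (intervalIntegral.intervalIntegrable_rpow' hdq).const_mul _
  refine hdom.mono_fun (by unfold gfun; fun_prop) ?_
  rw [uIoc_of_le hh]
  refine (ae_restrict_iff' measurableSet_Ioc).2 (Eventually.of_forall fun u hu => ?_)
  have hg := gfun_nonneg (K := K) (C := C) ⟨hu.1.le, hu.2⟩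
  dsimp only
  rw [Real.norm_of_nonneg (Real.rpow_nonneg hg q), Real.norm_of_nonneg
    (mul_nonneg (Real.rpow_nonneg hc q) (Real.rpow_nonneg hu.1.le _)), Real.rpow_mul hu.1.le,
    ← Real.mul_rpow hc (Real.rpow_nonneg hu.1.le _)]
  exact Real.rpow_le_rpow hg (gfun_le hu.1.le hh) hq

end Profile

section ExtremalFunction

variable {K C : Set (EuclideanSpace ℝ (Fin d))} {p : ℝ≥0∞} {h : ℝ}

theorem mem_smul_iff_gauge_lt (hK_open : IsOpen K) (hK_conv : Convex ℝ K)
    (hK_zero : (0 : EuclideanSpace ℝ (Fin d)) ∈ K) {t : ℝ} (ht : 0 < t)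
    (y : EuclideanSpace ℝ (Fin d)) : y ∈ t • K ↔ gauge K y < t := by
  conv_lhs => rw [← setOfPred_gauge_lt_one_eq_self_of_isOpen hK_conv hK_zero hK_open]
  rw [mem_smul_set_iff_inv_smul_mem₀ ht.ne', mem_ofPred_eq,
    gauge_smul_of_nonneg (inv_nonneg.2 ht.le), smul_eq_mul, inv_mul_lt_iff₀ ht, mul_one]

theorem fe_eq_integral_min (hK_open : IsOpen K) (hK_conv : Convex ℝ K)
    (hK_zero : (0 : EuclideanSpace ℝ (Fin d)) ∈ K) (hh : 0 < h) (y : EuclideanSpace ℝ (Fin d)) :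
    fe K C p h y = ∫ u in min (gauge K y) h..h, gfun K C h u ^ ((conjExp p).toReal - 1) := by
  have hmem := mem_smul_iff_gauge_lt hK_open hK_conv hK_zero hh y
  by_cases hy : y ∈ h • K
  · rw [fe, if_pos hy, min_eq_left (hmem.1 hy).le]
  · rw [fe, if_neg hy, min_eq_right (not_lt.1 (mt hmem.2 hy)), intervalIntegral.integral_same]

theorem fe_nonneg (hK_open : IsOpen K) (hh : 0 < h) : 0 ≤ fe K C p h := by
  intro y
  unfold fe
  split_ifs with hy
  · exact intervalIntegral.integral_nonneg (gauge_lt_of_mem_smul y h hh hK_open hy).le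
      fun u hu => Real.rpow_nonneg (gfun_nonneg ⟨(gauge_nonneg y).trans hu.1, hu.2⟩) _
  · exact le_rfl

theorem continuous_fe (hK_open : IsOpen K) (hK_conv : Convex ℝ K)
    (hK_zero : (0 : EuclideanSpace ℝ (Fin d)) ∈ K) (hq : 0 ≤ (conjExp p).toReal - 1)
    (hdq : -1 < (1 - (d : ℝ)) * ((conjExp p).toReal - 1)) (hh : 0 < h) :
    Continuous (fe K C p h) := by
  have hint := (intervalIntegrable_iff_integrableOn_Icc_of_le hh.le).1
    (intervalIntegrable_gfun_rpow (K := K) (C := C) hq hdq hh.le)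
  have hprofile := intervalIntegral.continuousOn_primitive_interval_left (a := 0)
    (by rwa [uIcc_of_le hh.le])
  rw [uIcc_of_le hh.le] at hprofile
  rw [funext (fe_eq_integral_min hK_open hK_conv hK_zero hh)]
  exact hprofile.comp_continuous
    ((continuous_gauge hK_conv (hK_open.mem_nhds hK_zero)).min continuous_const)
    fun y => ⟨le_min (gauge_nonneg y) hh.le, min_le_right _ _⟩

theorem hasCompactSupport_fe (hK_bdd : Bornology.IsBounded K) : HasCompactSupport (fe K C p h) :=
  HasCompactSupport.intro (hK_bdd.smul₀ h).isCompact_closure fun y hy => by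
    rw [fe, if_neg fun hmem => hy (subset_closure hmem)]

end ExtremalFunction

theorem statement6_general (d : ℕ) (hd : 1 ≤ d) (K C : Set (EuclideanSpace ℝ (Fin d)))
    (hC_open : IsOpen C) (hC_conv : Convex ℝ C)
    (hC_cone : ∀ x ∈ C, ∀ t : ℝ, 0 < t → t • x ∈ C) (hC_ne : C.Nonempty)
    (hK_open : IsOpen K) (hK_conv : Convex ℝ K) (hK_bdd : Bornology.IsBounded K)
    (hK_zero : (0 : EuclideanSpace ℝ (Fin d)) ∈ K)
    (p : ℝ≥0∞) (hp : (d : ℝ≥0∞) < p) (h : ℝ) (hh : 0 < h) :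
    semiNorm K C h (fe K C p h) = ∫ y in (h • K) ∩ C, fe K C p h y ∧
      semiNormAll K C (fe K C p h) = ∫ y in (h • K) ∩ C, fe K C p h y ∧
      eLpNorm (fe K C p h) 1 (volume.restrict C) =
        ENNReal.ofReal (∫ y in (h • K) ∩ C, fe K C p h y) := by
  obtain ⟨hq, hdq⟩ := conjExp_toReal_sub_one_bounds hd hp
  have hcont : Continuous (fe K C p h) := continuous_fe hK_open hK_conv hK_zero hq hdq hh
  have hsupp : HasCompactSupport (fe K C p h) := hasCompactSupport_fe hK_bdd
  have hnonneg : 0 ≤ fe K C p h := fe_nonneg hK_open hh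
  have hfe_supp : ∀ y ∉ h • K, fe K C p h y = 0 := fun y hy => if_neg hy
  have hfin : volume (h • K ∩ C) < ⊤ := ((hK_bdd.smul₀ h).subset inter_subset_left).measure_lt_top
  rw [setIntegral_inter_eq_of_forall_notMem_eq_zero hC_open.measurableSet hfe_supp]
  obtain ⟨hsemi, hsemiAll⟩ := semiNorm_and_semiNormAll_eq_setIntegral hcont hsupp hnonneg
    hK_open.measurableSet hC_open.measurableSet
    (fun x hx y hy => hC_conv.add_mem_of_smul_mem hC_cone hx hy)
    (zero_mem_closure_of_smul_mem hC_cone hC_ne) hh hfin hfe_supp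
  exact ⟨hsemi, hsemiAll,
    eLpNorm_one_eq_ofReal_integral (hcont.integrable_of_hasCompactSupport hsupp).restrict hnonneg⟩

/-- `⌋f_{e,h}⌈_h = ⌋f_{e,h}⌈ = ‖f_{e,h}‖_{L_1(C)} = ∫_{hK∩C} f_{e,h}(y) dy`. -/
theorem statement6 (d : ℕ) (hd : 1 ≤ d) (K C : Set (EuclideanSpace ℝ (Fin d)))
    (hC_open : IsOpen C) (hC_conv : Convex ℝ C)
    (hC_cone : ∀ x ∈ C, ∀ t : ℝ, 0 < t → t • x ∈ C) (hC_ne : C.Nonempty)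
    (hK_open : IsOpen K) (hK_conv : Convex ℝ K) (hK_bdd : Bornology.IsBounded K)
    (hK_symm : ∀ x ∈ K, -x ∈ K) (hK_zero : (0 : EuclideanSpace ℝ (Fin d)) ∈ K)
    (p : ℝ≥0∞) (hp : (d : ℝ≥0∞) < p) (h : ℝ) (hh : 0 < h) :
    semiNorm K C h (fe K C p h) = ∫ y in (h • K) ∩ C, fe K C p h y ∧
      semiNormAll K C (fe K C p h) = ∫ y in (h • K) ∩ C, fe K C p h y ∧
      eLpNorm (fe K C p h) 1 (volume.restrict C) =
        ENNReal.ofReal (∫ y in (h • K) ∩ C, fe K C p h y) :=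
  statement6_general d hd K C hC_open hC_conv hC_cone hC_ne hK_open hK_conv hK_bdd hK_zero p hp h hh

end
end

section
/- Let X, Y, Z be real vector spaces equipped with seminorms ‖·‖_X, ‖·‖_Y, ‖·‖_Z, let A : D_A → Y and B : D_B → Z be homogeneous operators (A(λx) = λ·A(x), B(λx) = λ·B(x) for all λ ∈ ℝ) with D_B ⊆ D_A ⊆ X, and let S : X → Y be a bounded linear operator with ‖S‖_{X→Y} = sup{‖Sx‖_Y : ‖x‖_X ≤ 1}. Set 𝔐 = {x ∈ D_B : ‖Bx‖_Z ≤ 1} and U(A,S;𝔐) = sup{‖Ax − Sx‖_Y : x ∈ 𝔐}. Then for every x ∈ D_B, ‖Ax‖_Y ≤ U(A,S;𝔐)·‖Bx‖_Z + ‖S‖_{X→Y}·‖x‖_X. -/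
/-!
Both terms come from one fact: if `f` and `g ≥ 0` are positively homogeneous on a cone and `M` is
the supremum of `f` on `{g ≤ 1}`, then `f x ≤ M * g x`. Indeed, for `t > g x` the point `t⁻¹ • x`
lies in `{g ≤ 1}`, so `f x ≤ M * t`; letting `t ↓ g x` also covers `g x = 0`. Apply this to
`‖S ·‖_Y` against `‖·‖_X` and to `‖A · - S ·‖_Y` against `‖B ·‖_Z`, and add the two bounds via
`‖Ax‖ ≤ ‖Ax - Sx‖ + ‖Sx‖`.
-/

open Filter Topology

theorem Seminorm.map_smul_of_nonneg {E : Type*} [AddCommGroup E] [Module ℝ E] (p : Seminorm ℝ E)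
    {c : ℝ} (hc : 0 ≤ c) (x : E) : p (c • x) = c * p x := by
  rw [map_smul_eq_mul, Real.norm_of_nonneg hc]

theorem le_sSup_image_mul_of_posHomogeneous {X : Type*} [SMul ℝ X] {D : Set X} {f g : X → ℝ}
    (hD : ∀ c : ℝ, 0 < c → ∀ x ∈ D, c • x ∈ D)
    (hf : ∀ c : ℝ, 0 < c → ∀ x ∈ D, f (c • x) = c * f x)
    (hg : ∀ c : ℝ, 0 < c → ∀ x ∈ D, g (c • x) = c * g x)
    (hbdd : BddAbove (f '' {x ∈ D | g x ≤ 1})) {x : X} (hx : x ∈ D) (hgx : 0 ≤ g x) :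
    f x ≤ sSup (f '' {x ∈ D | g x ≤ 1}) * g x := by
  set M := sSup (f '' {x ∈ D | g x ≤ 1})
  have above : ∀ t, g x < t → f x ≤ M * t := by
    intro t ht
    have ht₀ : 0 < t := hgx.trans_lt ht
    have hmem : t⁻¹ • x ∈ {x ∈ D | g x ≤ 1} := by
      refine ⟨hD _ (inv_pos.2 ht₀) x hx, ?_⟩
      rw [hg _ (inv_pos.2 ht₀) x hx, inv_mul_le_iff₀ ht₀, mul_one]
      exact ht.le
    have hle : t⁻¹ * f x ≤ M := hf _ (inv_pos.2 ht₀) x hx ▸ le_csSup hbdd ⟨_, hmem, rfl⟩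
    rwa [inv_mul_le_iff₀ ht₀, mul_comm] at hle
  have hlim : Tendsto (fun t => M * t) (𝓝[>] (g x)) (𝓝 (M * g x)) :=
    ((continuous_const_mul M).tendsto _).mono_left nhdsWithin_le_nhds
  exact ge_of_tendsto hlim (eventually_nhdsWithin_of_forall above)

theorem statement19_general {X Y Z : Type*}
    [AddCommGroup X] [Module ℝ X] [AddCommGroup Y] [Module ℝ Y]
    [AddCommGroup Z] [Module ℝ Z]
    (nX : Seminorm ℝ X) (nY : Seminorm ℝ Y) (nZ : Seminorm ℝ Z)
    (DA DB : Set X) (hDBA : DB ⊆ DA)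
    (hDB_smul : ∀ (c : ℝ), ∀ x ∈ DB, c • x ∈ DB)
    (A : X → Y) (B : X → Z)
    (hA_hom : ∀ (c : ℝ), ∀ x ∈ DA, A (c • x) = c • A x)
    (hB_hom : ∀ (c : ℝ), ∀ x ∈ DB, B (c • x) = c • B x)
    (S : X →ₗ[ℝ] Y)
    (hS_bdd : BddAbove ((fun x => nY (S x)) '' {x | nX x ≤ 1}))
    (hU_bdd : BddAbove ((fun x => nY (A x - S x)) '' {x ∈ DB | nZ (B x) ≤ 1})) :
    ∀ x ∈ DB,
      nY (A x) ≤
        sSup ((fun x => nY (A x - S x)) '' {x ∈ DB | nZ (B x) ≤ 1}) * nZ (B x) +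
          sSup ((fun x => nY (S x)) '' {x | nX x ≤ 1}) * nX x := by
  intro x hx
  have hS : nY (S x) ≤ sSup ((fun x => nY (S x)) '' {x | nX x ≤ 1}) * nX x := by
    rw [← Set.sep_univ] at hS_bdd ⊢
    refine le_sSup_image_mul_of_posHomogeneous (D := Set.univ) (fun _ _ _ _ => trivial)
      (fun c hc y _ => ?_) (fun c hc y _ => nX.map_smul_of_nonneg hc.le y) hS_bdd trivial
      (apply_nonneg nX x)
    simp only [map_smul, nY.map_smul_of_nonneg hc.le]
  have hAS : nY (A x - S x) ≤
      sSup ((fun x => nY (A x - S x)) '' {x ∈ DB | nZ (B x) ≤ 1}) * nZ (B x) := by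
    refine le_sSup_image_mul_of_posHomogeneous (fun c _ => hDB_smul c) (fun c hc y hy => ?_)
      (fun c hc y hy => ?_) hU_bdd hx (apply_nonneg nZ _)
    · rw [hA_hom c y (hDBA hy), map_smul, ← smul_sub, nY.map_smul_of_nonneg hc.le]
    · rw [hB_hom c y hy, nZ.map_smul_of_nonneg hc.le]
  calc nY (A x) ≤ nY (A x - S x) + nY (S x) := by
        simpa using map_add_le_add nY (A x - S x) (S x)
    _ ≤ _ := add_le_add hAS hS

/-- Abstract Landau–Kolmogorov–Nagy type inequality: if `X, Y, Z` are real
vector spaces with seminorms, `A : D_A → Y`, `B : D_B → Z` are homogeneous operators with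
`D_B ⊆ D_A ⊆ X` (domains closed under scalar multiplication), `S : X → Y` is a bounded linear
operator, `𝔐 = {x ∈ D_B : ‖Bx‖_Z ≤ 1}` and `U(A,S;𝔐) = sup {‖Ax - Sx‖_Y : x ∈ 𝔐}`, then for
every `x ∈ D_B`, `‖Ax‖_Y ≤ U(A,S;𝔐) ‖Bx‖_Z + ‖S‖_{X→Y} ‖x‖_X`. -/
theorem statement19 {X Y Z : Type*}
    [AddCommGroup X] [Module ℝ X] [AddCommGroup Y] [Module ℝ Y]
    [AddCommGroup Z] [Module ℝ Z]
    (nX : Seminorm ℝ X) (nY : Seminorm ℝ Y) (nZ : Seminorm ℝ Z)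
    (DA DB : Set X) (hDBA : DB ⊆ DA)
    (hDA_smul : ∀ (c : ℝ), ∀ x ∈ DA, c • x ∈ DA)
    (hDB_smul : ∀ (c : ℝ), ∀ x ∈ DB, c • x ∈ DB)
    (A : X → Y) (B : X → Z)
    (hA_hom : ∀ (c : ℝ), ∀ x ∈ DA, A (c • x) = c • A x)
    (hB_hom : ∀ (c : ℝ), ∀ x ∈ DB, B (c • x) = c • B x)
    (S : X →ₗ[ℝ] Y)
    (hS_bdd : BddAbove ((fun x => nY (S x)) '' {x | nX x ≤ 1}))
    (hU_bdd : BddAbove ((fun x => nY (A x - S x)) '' {x ∈ DB | nZ (B x) ≤ 1})) :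
    ∀ x ∈ DB,
      nY (A x) ≤
        sSup ((fun x => nY (A x - S x)) '' {x ∈ DB | nZ (B x) ≤ 1}) * nZ (B x) +
          sSup ((fun x => nY (S x)) '' {x | nX x ≤ 1}) * nX x :=
  statement19_general nX nY nZ DA DB hDBA hDB_smul A B hA_hom hB_hom S hS_bdd hU_bdd
end
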